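/- Let x ∈ ℓ∞(ℝ) be a bounded sequence such that for every p ∈ ℕ and every ε > 0 there exists k ≠ p with |x_k| ≥ |x_p| − ε (i.e., the strict dominance condition fails at every index). Then the sup norm φ(y) = supₙ |yₙ| is not Gâteaux differentiable at x. -/

import Mathlib

/-!
Call `S ⊆ ℕ` norming for `x` when `sup_{n ∈ S} |xₙ| = ‖x‖`. If both `S` and `Sᶜ` are norming,
the direction `h` with `hₙ = sign xₙ` (taking `sign 0 = 1`) on `S` and `hₙ = -sign xₙ` off `S`
satisfies `‖x + t • h‖ = ‖x‖ + |t|` for every real `t`, so `t ↦ ‖x + t • h‖` has a corner at `0`.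
Such an `S` exists: if `‖x‖ = |x_p|` take `S = {p}`, the hypothesis at `p` saying exactly that
`{p}ᶜ` is norming; otherwise `‖x‖` is approached along infinitely many indices, and `S` takes
every other one of them.
-/

open Filter Topology

/-- Gâteaux differentiability of `φ` at `x` with (continuous linear) derivative `u`. -/
def IsGateauxDerivAt {X : Type*} [NormedAddCommGroup X] [NormedSpace ℝ X]
    (φ : X → ℝ) (u : X →L[ℝ] ℝ) (x : X) : Prop :=
  ∀ h : X, Tendsto (fun t : ℝ => (φ (x + t • h) - φ x) / t) (𝓝[≠] (0 : ℝ)) (𝓝 (u h))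

section Gateaux

variable {X : Type*} [NormedAddCommGroup X] [NormedSpace ℝ X] {φ : X → ℝ} {u : X →L[ℝ] ℝ}
  {x : X}

theorem IsGateauxDerivAt.hasDerivAt_line (hφ : IsGateauxDerivAt φ u x) (h : X) :
    HasDerivAt (fun t : ℝ => φ (x + t • h)) (u h) 0 := by
  rw [hasDerivAt_iff_tendsto_slope]
  refine (hφ h).congr fun t => ?_
  simp [slope_def_field]

theorem not_isGateauxDerivAt_of_eq_add_abs {h : X} (hφ : ∀ t : ℝ, φ (x + t • h) = φ x + |t|)
    (u : X →L[ℝ] ℝ) : ¬ IsGateauxDerivAt φ u x := fun hu => by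
  have hline := (hu.hasDerivAt_line h).differentiableAt
  simp only [hφ, differentiableAt_const_add_iff] at hline
  exact not_differentiableAt_abs_zero hline

end Gateaux

theorem abs_add_mul_sign (a s : ℝ) : |a + s * (if 0 ≤ a then 1 else -1)| = |(|a| + s)| := by
  split_ifs with ha
  · rw [abs_of_nonneg ha, mul_one]
  · rw [abs_of_neg (not_le.mp ha), ← abs_neg]
    ring_nf

namespace lp

section Index

variable {ι : Type*}

/-- The coordinates of `x` indexed by `S` have supremum `‖x‖`; phrased with strict lower bounds
so that `S` must be nonempty even when `x = 0`. -/
def IsNormingSet (x : lp (fun _ : ι => ℝ) ⊤) (S : Set ι) : Prop :=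
  ∀ c < ‖x‖, ∃ i ∈ S, c < |x i|

theorem abs_apply_le_norm (x : lp (fun _ : ι => ℝ) ⊤) (i : ι) : |x i| ≤ ‖x‖ :=
  norm_apply_le_norm ENNReal.top_ne_zero x i

theorem isNormingSet_univ [Nonempty ι] (x : lp (fun _ : ι => ℝ) ⊤) : IsNormingSet x Set.univ := by
  intro c hc
  rw [norm_eq_ciSup] at hc
  obtain ⟨i, hi⟩ := exists_lt_of_lt_ciSup hc
  exact ⟨i, trivial, hi⟩

open Classical in
noncomputable def kinkDirection (x : lp (fun _ : ι => ℝ) ⊤) (S : Set ι) :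
    lp (fun _ : ι => ℝ) ⊤ :=
  ⟨fun i => (if i ∈ S then 1 else -1) * (if 0 ≤ x i then 1 else -1),
    memℓp_infty ⟨1, by rintro _ ⟨i, rfl⟩; dsimp only; split_ifs <;> norm_num⟩⟩

variable {x : lp (fun _ : ι => ℝ) ⊤} {S : Set ι}

theorem kinkDirection_apply_of_mem {i : ι} (hi : i ∈ S) :
    kinkDirection x S i = if 0 ≤ x i then 1 else -1 := by
  simp only [kinkDirection, if_pos hi, one_mul]

theorem kinkDirection_apply_of_notMem {i : ι} (hi : i ∉ S) :
    kinkDirection x S i = -(if 0 ≤ x i then 1 else -1) := by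
  simp only [kinkDirection, if_neg hi, neg_one_mul]

theorem norm_kinkDirection_le : ‖kinkDirection x S‖ ≤ 1 :=
  norm_le_of_forall_le zero_le_one fun i => by
    simp only [kinkDirection, Real.norm_eq_abs]
    split_ifs <;> norm_num

theorem add_smul_apply (t : ℝ) (h : lp (fun _ : ι => ℝ) ⊤) (i : ι) :
    (x + t • h) i = x i + t * h i := by
  rw [coeFn_add, Pi.add_apply, coeFn_smul, Pi.smul_apply, smul_eq_mul]

theorem norm_add_smul_kinkDirection (hS : IsNormingSet x S) (hSc : IsNormingSet x Sᶜ) (t : ℝ) :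
    ‖x + t • kinkDirection x S‖ = ‖x‖ + |t| := by
  refine le_antisymm ?_ (le_of_forall_lt fun c hc => ?_)
  · calc ‖x + t • kinkDirection x S‖ ≤ ‖x‖ + |t| * ‖kinkDirection x S‖ := by
          simpa [norm_smul] using norm_add_le x (t • kinkDirection x S)
      _ ≤ ‖x‖ + |t| := by gcongr; exact mul_le_of_le_one_right (abs_nonneg t) norm_kinkDirection_le
  · suffices ∃ i, c < |(x + t • kinkDirection x S) i| from
      let ⟨i, hi⟩ := this; hi.trans_le (abs_apply_le_norm _ i)
    rcases le_or_gt 0 t with ht | ht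
    · obtain ⟨i, hi, hci⟩ := hS (c - t) (by rw [abs_of_nonneg ht] at hc; linarith)
      refine ⟨i, ?_⟩
      rw [add_smul_apply, kinkDirection_apply_of_mem hi, abs_add_mul_sign,
        abs_of_nonneg (by positivity)]
      linarith
    · obtain ⟨i, hi, hci⟩ := hSc (c + t) (by rw [abs_of_neg ht] at hc; linarith)
      refine ⟨i, ?_⟩
      rw [add_smul_apply, kinkDirection_apply_of_notMem hi, mul_neg, ← neg_mul,
        abs_add_mul_sign, abs_of_nonneg (by linarith [abs_nonneg (x i)])]
      linarith

theorem isNormingSet_singleton {p : ι} (hp : |x p| = ‖x‖) : IsNormingSet x {p} :=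
  fun _ hc => ⟨p, rfl, hp ▸ hc⟩

theorem isNormingSet_compl_singleton {p : ι}
    (hp : ∀ ε : ℝ, 0 < ε → ∃ k, k ≠ p ∧ |x p| - ε ≤ |x k|) : IsNormingSet x {p}ᶜ := by
  intro c hc
  have : Nonempty ι := ⟨p⟩
  obtain ⟨i, -, hci⟩ := isNormingSet_univ x c hc
  by_cases hip : i = p
  · subst hip
    obtain ⟨k, hki, hk⟩ := hp ((|x i| - c) / 2) (by linarith)
    exact ⟨k, hki, by linarith⟩
  · exact ⟨i, hip, hci⟩

end Index

section Nat

variable {x : lp (fun _ : ℕ => ℝ) ⊤}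

theorem frequently_lt_abs_of_forall_abs_lt_norm (h : ∀ n, |x n| < ‖x‖) {c : ℝ} (hc : c < ‖x‖) :
    ∃ᶠ n in atTop, c < |x n| := by
  rw [frequently_atTop]
  intro N
  induction N generalizing c with
  | zero =>
    obtain ⟨n, -, hn⟩ := isNormingSet_univ x c hc
    exact ⟨n, n.zero_le, hn⟩
  | succ N ih =>
    obtain ⟨n, hNn, hn⟩ := ih (max_lt hc (h N))
    have hNn' : N ≠ n := by
      rintro rfl
      exact (le_max_right _ _).not_gt hn
    exact ⟨n, lt_of_le_of_ne hNn hNn', (le_max_left _ _).trans_lt hn⟩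

theorem exists_isNormingSet_and_compl_of_frequently
    (h : ∀ c < ‖x‖, ∃ᶠ n in atTop, c < |x n|) :
    ∃ S : Set ℕ, IsNormingSet x S ∧ IsNormingSet x Sᶜ := by
  have ha : Tendsto (fun j : ℕ => ‖x‖ - 1 / ((j : ℝ) + 1)) atTop (𝓝 ‖x‖) := by
    simpa using (tendsto_const_nhds (x := ‖x‖)).sub tendsto_one_div_add_atTop_nhds_zero_nat
  obtain ⟨φ, hφ, hφa⟩ := extraction_forall_of_frequently fun j =>
    h (‖x‖ - 1 / ((j : ℝ) + 1)) (sub_lt_self _ Nat.one_div_pos_of_nat)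
  have hφ_lt : ∀ c < ‖x‖, ∃ N, ∀ j ≥ N, c < |x (φ j)| := fun c hc =>
    eventually_atTop.mp ((ha.eventually_const_lt hc).mono fun j hj => hj.trans (hφa j))
  refine ⟨Set.range fun j => φ (2 * j), fun c hc => ?_, fun c hc => ?_⟩
  · obtain ⟨N, hN⟩ := hφ_lt c hc
    exact ⟨φ (2 * N), ⟨N, rfl⟩, hN _ (by omega)⟩
  · obtain ⟨N, hN⟩ := hφ_lt c hc
    refine ⟨φ (2 * N + 1), ?_, hN _ (by omega)⟩
    rintro ⟨j, hj⟩
    have := hφ.injective hj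
    omega

theorem exists_isNormingSet_and_compl
    (hx : ∀ p : ℕ, ∀ ε : ℝ, 0 < ε → ∃ k : ℕ, k ≠ p ∧ |x p| - ε ≤ |x k|) :
    ∃ S : Set ℕ, IsNormingSet x S ∧ IsNormingSet x Sᶜ := by
  by_cases hattained : ∃ p, |x p| = ‖x‖
  · obtain ⟨p, hp⟩ := hattained
    exact ⟨{p}, isNormingSet_singleton hp, isNormingSet_compl_singleton (hx p)⟩
  · push Not at hattained
    exact exists_isNormingSet_and_compl_of_frequently fun c hc =>
      frequently_lt_abs_of_forall_abs_lt_norm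
        (fun n => (abs_apply_le_norm x n).lt_of_ne (hattained n)) hc

end Nat

end lp

/-- If the strict dominance condition fails at every index of `x ∈ ℓ∞(ℝ)`, then the sup norm
is not Gâteaux differentiable at `x`. -/
theorem linf_norm_not_gateaux (x : lp (fun _ : ℕ => ℝ) ⊤)
    (hx : ∀ p : ℕ, ∀ ε : ℝ, 0 < ε → ∃ k : ℕ, k ≠ p ∧ |x p| - ε ≤ |x k|) :
    ¬ ∃ u : lp (fun _ : ℕ => ℝ) ⊤ →L[ℝ] ℝ,
        IsGateauxDerivAt (fun y : lp (fun _ : ℕ => ℝ) ⊤ => ‖y‖) u x := by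
  rintro ⟨u, hu⟩
  obtain ⟨S, hS, hSc⟩ := lp.exists_isNormingSet_and_compl hx
  exact not_isGateauxDerivAt_of_eq_add_abs (lp.norm_add_smul_kinkDirection hS hSc) u hu
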